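/- Let $m \ge 1$ and let $\ell_1, \dots, \ell_m$ be positive integers with $\gcd(\ell_1, \dots, \ell_m) = 1$. Let $T = \{ (u^{\ell_1}, \dots, u^{\ell_m}) : u \in \mathbb{C}^\times \} \le (\mathbb{C}^\times)^m$, let $D$ be a finite subgroup of $(\mathbb{C}^\times)^m$, and let $G$ be the subgroup of $(\mathbb{C}^\times)^m$ generated by $D$ and $T$. For $I \in \mathbb{Z}^m$ and $g \in (\mathbb{C}^\times)^m$ write $g^I = \prod_j g_j^{i_j}$, and let $L_G = \{ I \in \mathbb{Z}^m : g^I = 1 \text{ for all } g \in G \}$. Then the quotient group $G/T$ is finite, and it is isomorphic to the torsion subgroup of $\hat{G} = \mathbb{Z}^m / L_G$. -/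

import Mathlib

/-!
Every monomial character `g ↦ g^I` with `I` in the annihilator `S` of `T` (the `I` with
`∑ ℓⱼ Iⱼ = 0`) descends to a character of `F = G/T`, and it is trivial on `F` exactly when
`I ∈ L_G`; so `S/L_G` embeds in the dual of `F`. Since `gcd ℓ = 1`, the characters in `S` cut
out exactly `T`, so they separate the points of the finite group `F`, and a point-separating
subgroup of the dual of a finite abelian group is the whole dual. Hence `S/L_G ≅ F^ ≅ F`.
Finally `S/L_G` is finite, hence torsion, and `ℤ^m/S ↪ ℤ` is torsion-free, so `S/L_G` is
exactly the torsion subgroup of `ℤ^m/L_G`.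
-/

open Finset

lemma Finset.natCast_gcd {α : Type*} (s : Finset α) (f : α → ℕ) :
    ((s.gcd f : ℕ) : ℤ) = s.gcd fun a => (f a : ℤ) := by
  classical
  induction s using Finset.induction with
  | empty => simp
  | insert a s ha ih =>
    rw [gcd_insert, gcd_insert, ← ih, ← Int.coe_gcd, Int.gcd_natCast_natCast]
    rfl

lemma Finset.exists_sum_mul_eq_one_of_gcd_eq_one {α : Type*} {s : Finset α} {f : α → ℕ}
    (h : s.gcd f = 1) : ∃ a : α → ℤ, ∑ j ∈ s, (f j : ℤ) * a j = 1 := by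
  obtain ⟨a, ha⟩ := s.gcd_eq_sum_mul fun j => (f j : ℤ)
  exact ⟨a, by rw [← ha, ← s.natCast_gcd, h, Nat.cast_one]⟩

lemma Finset.prod_zpow_eq_zpow_sum {ι M : Type*} [CommGroup M] (s : Finset ι) (f : ι → ℤ)
    (a : M) : ∏ i ∈ s, a ^ f i = a ^ ∑ i ∈ s, f i :=
  cons_induction (by simp) (fun _ _ _ _ ↦ by simp [prod_cons, sum_cons, zpow_add, *]) s

section Monomial

variable {ι M : Type*} [Fintype ι] [CommGroup M]

def monomialChar (I : ι → ℤ) : (ι → M) →* M where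
  toFun g := ∏ j, g j ^ I j
  map_one' := by simp
  map_mul' g h := by simp [mul_zpow, prod_mul_distrib]

@[simp]
lemma monomialChar_apply (I : ι → ℤ) (g : ι → M) : monomialChar I g = ∏ j, g j ^ I j := rfl

lemma monomialChar_add (I J : ι → ℤ) (g : ι → M) :
    monomialChar (I + J) g = monomialChar I g * monomialChar J g := by
  simp [zpow_add, prod_mul_distrib]

lemma monomialChar_zsmul (n : ℤ) (I : ι → ℤ) (g : ι → M) :
    monomialChar (n • I) g = monomialChar I g ^ n := by
  simp [mul_comm n, zpow_mul, prod_zpow]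

lemma monomialChar_single [DecidableEq ι] (j : ι) (g : ι → M) :
    monomialChar (Pi.single j 1) g = g j := by
  simp [Pi.single_apply]

lemma monomialChar_pow (ℓ : ι → ℕ) (I : ι → ℤ) (u : M) :
    monomialChar I (fun j => u ^ ℓ j) = u ^ ∑ j, (ℓ j : ℤ) * I j := by
  simp [← zpow_natCast, ← zpow_mul, prod_zpow_eq_zpow_sum]

end Monomial

section Annihilator

variable {ι M : Type*} [Fintype ι] [CommGroup M]

def charAnnihilator (H : Subgroup (ι → M)) : AddSubgroup (ι → ℤ) where
  carrier := {I | ∀ g ∈ H, monomialChar I g = 1}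
  zero_mem' g _ := by simp
  add_mem' hI hJ g hg := by rw [monomialChar_add, hI g hg, hJ g hg, one_mul]
  neg_mem' {I} hI g hg := by
    rw [← neg_one_zsmul, monomialChar_zsmul, hI g hg, one_zpow]

lemma charAnnihilator_anti {H K : Subgroup (ι → M)} (h : H ≤ K) :
    charAnnihilator K ≤ charAnnihilator H :=
  fun _ hI g hg => hI g (h hg)

def torus (ℓ : ι → ℕ) : Subgroup (ι → M) where
  carrier := {y | ∃ u : M, y = fun j => u ^ ℓ j}
  one_mem' := ⟨1, funext fun _ => (one_pow _).symm⟩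
  mul_mem' := by
    rintro _ _ ⟨u, rfl⟩ ⟨v, rfl⟩
    exact ⟨u * v, funext fun _ => (mul_pow u v _).symm⟩
  inv_mem' := by
    rintro _ ⟨u, rfl⟩
    exact ⟨u⁻¹, funext fun _ => (inv_pow u _).symm⟩

lemma mem_torus_of_forall_monomialChar_eq_one {ℓ : ι → ℕ} (hℓ : univ.gcd ℓ = 1) {g : ι → M}
    (hg : ∀ I : ι → ℤ, ∑ j, (ℓ j : ℤ) * I j = 0 → monomialChar I g = 1) : g ∈ torus ℓ := by
  classical
  obtain ⟨a, ha⟩ := exists_sum_mul_eq_one_of_gcd_eq_one hℓ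
  refine ⟨monomialChar a g, funext fun j => ?_⟩
  have hweight : ∑ i, (ℓ i : ℤ) * (Pi.single j 1 - (ℓ j : ℤ) • a : ι → ℤ) i = 0 := by
    simp [mul_sub, sum_sub_distrib, Pi.single_apply, mul_left_comm _ (ℓ j : ℤ), ← mul_sum, ha]
  have := hg _ hweight
  rw [sub_eq_add_neg, monomialChar_add, ← neg_zsmul, monomialChar_zsmul, monomialChar_single,
    zpow_neg, mul_inv_eq_one] at this
  rw [this, zpow_natCast]

lemma mem_charAnnihilator_torus_iff {ℓ : ι → ℕ} {I : ι → ℤ} :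
    I ∈ charAnnihilator (torus ℓ : Subgroup (ι → ℂˣ)) ↔ ∑ j, (ℓ j : ℤ) * I j = 0 := by
  refine ⟨fun hI => ?_, fun hI => ?_⟩
  · -- `2` has infinite order in `ℂˣ`
    have h2 := hI _ ⟨Units.mk0 2 two_ne_zero, rfl⟩
    rw [monomialChar_pow] at h2
    simpa [zpow_eq_one_iff_right₀] using congrArg (fun u : ℂˣ => ‖(u : ℂ)‖) h2
  · rintro _ ⟨u, rfl⟩
    rw [monomialChar_pow, hI, zpow_zero]

lemma nsmul_mem_charAnnihilator_torus_iff {ℓ : ι → ℕ} {I : ι → ℤ} {n : ℕ} (hn : n ≠ 0) :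
    n • I ∈ charAnnihilator (torus ℓ : Subgroup (ι → ℂˣ)) ↔
      I ∈ charAnnihilator (torus ℓ : Subgroup (ι → ℂˣ)) := by
  simp [mem_charAnnihilator_torus_iff, mul_left_comm _ (n : ℤ), ← mul_sum, hn]

end Annihilator

-- Instance search does not find `Monoid.neZero_exponent_of_finite` through the quotient group
-- structure, which `HasEnoughRootsOfUnity ℂ (Monoid.exponent (G ⧸ N))` needs.
instance QuotientGroup.neZero_exponent_of_finite {G : Type*} [Group G] (N : Subgroup G) [N.Normal]
    [Finite (G ⧸ N)] : NeZero (Monoid.exponent (G ⧸ N)) :=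
  ⟨Monoid.exponent_ne_zero_of_finite⟩

lemma CommGroup.eq_top_of_forall_apply_eq_one {F M : Type*} [CommGroup F] [Finite F]
    [CommMonoid M] [HasEnoughRootsOfUnity M (Monoid.exponent F)] {H : Subgroup (F →* Mˣ)}
    (hH : ∀ a : F, (∀ ψ ∈ H, ψ a = 1) → a = 1) : H = ⊤ := by
  let e := subgroupOrderIsoSubgroupMonoidHom F M
  have hbot : e.symm (OrderDual.toDual H) = ⊥ := by
    ext a
    rw [mem_subgroupOrderIsoSubgroupMonoidHom_symm_iff, Subgroup.mem_bot]
    exact ⟨hH a, fun ha ψ _ => ha ▸ map_one ψ⟩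
  have := congrArg (fun K => OrderDual.ofDual (e K)) hbot
  simp only [OrderIso.apply_symm_apply, OrderDual.ofDual_toDual] at this
  rw [this, eq_top_iff]
  intro ψ _
  simp

section QuotientChar

variable {ι : Type*} [Fintype ι] {G T : Subgroup (ι → ℂˣ)}

variable (G T) in
def quotientMonomialChar :
    charAnnihilator T →+ Additive (G ⧸ T.subgroupOf G →* ℂˣ) where
  toFun I := .ofMul <| QuotientGroup.lift _ ((monomialChar I.1).comp G.subtype)
    fun g hg => I.2 g (Subgroup.mem_subgroupOf.mp hg)
  map_zero' := QuotientGroup.monoidHom_ext _ <| MonoidHom.ext fun g =>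
    show monomialChar 0 g.1 = 1 by simp
  map_add' I J := QuotientGroup.monoidHom_ext _ <| MonoidHom.ext fun g =>
    monomialChar_add I.1 J.1 g.1

lemma ker_quotientMonomialChar :
    (quotientMonomialChar G T).ker = (charAnnihilator G).addSubgroupOf (charAnnihilator T) := by
  ext I
  rw [AddMonoidHom.mem_ker, AddSubgroup.mem_addSubgroupOf]
  refine ⟨fun hI g hg => ?_, fun hI => QuotientGroup.monoidHom_ext _ <| MonoidHom.ext fun g => ?_⟩
  · exact congrArg
      (fun χ : Additive (G ⧸ T.subgroupOf G →* ℂˣ) => χ.toMul (QuotientGroup.mk (⟨g, hg⟩ : G))) hI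
  · exact hI g.1 g.2

lemma quotientMonomialChar_surjective [Finite (G ⧸ T.subgroupOf G)]
    (hT : ∀ g ∈ G, (∀ I ∈ charAnnihilator T, monomialChar I g = 1) → g ∈ T) :
    Function.Surjective (quotientMonomialChar G T) := by
  suffices AddSubgroup.toSubgroup' (quotientMonomialChar G T).range = ⊤ by
    intro χ
    have hχ : χ.toMul ∈ AddSubgroup.toSubgroup' (quotientMonomialChar G T).range :=
      this ▸ Subgroup.mem_top _
    exact hχ
  refine CommGroup.eq_top_of_forall_apply_eq_one (F := G ⧸ T.subgroupOf G) (M := ℂ)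
    fun a ha => ?_
  obtain ⟨g, rfl⟩ := QuotientGroup.mk_surjective a
  exact (QuotientGroup.eq_one_iff g).mpr <| Subgroup.mem_subgroupOf.mpr <|
    hT g.1 g.2 fun I hI => ha _ ⟨⟨I, hI⟩, rfl⟩

noncomputable def charAnnihilatorQuotientEquiv [Finite (G ⧸ T.subgroupOf G)]
    (hT : ∀ g ∈ G, (∀ I ∈ charAnnihilator T, monomialChar I g = 1) → g ∈ T) :
    charAnnihilator T ⧸ (charAnnihilator G).addSubgroupOf (charAnnihilator T) ≃+
      Additive (G ⧸ T.subgroupOf G →* ℂˣ) := by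
  let e₁ := QuotientAddGroup.quotientAddEquivOfEq (ker_quotientMonomialChar (G := G) (T := T))
  let e₂ := QuotientAddGroup.quotientKerEquivOfSurjective
    (H := Additive (G ⧸ T.subgroupOf G →* ℂˣ)) _ (quotientMonomialChar_surjective hT)
  exact e₁.symm.trans e₂

end QuotientChar

noncomputable def AddSubgroup.quotientEquivTorsion {A : Type*} [AddCommGroup A]
    {N S : AddSubgroup A} (hNS : N ≤ S) (hS : ∀ (n : ℕ) (a : A), n ≠ 0 → n • a ∈ S → a ∈ S)
    (htors : IsAddTorsion (S ⧸ N.addSubgroupOf S)) :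
    S ⧸ N.addSubgroupOf S ≃+ AddCommGroup.torsion (A ⧸ N) := by
  let θ : S →+ AddCommGroup.torsion (A ⧸ N) :=
    ((QuotientAddGroup.mk' N).comp S.subtype).codRestrict _ fun a =>
      (QuotientAddGroup.map (N.addSubgroupOf S) N S.subtype le_rfl).isOfFinAddOrder (htors a)
  have hθ : Function.Surjective θ := by
    rintro ⟨x, hx⟩
    induction x using QuotientAddGroup.induction_on with | H a => ?_
    obtain ⟨n, hn, hna⟩ := isOfFinAddOrder_iff_nsmul_eq_zero.mp hx
    rw [← QuotientAddGroup.mk_nsmul, QuotientAddGroup.eq_zero_iff] at hna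
    exact ⟨⟨a, hS n a hn.ne' (hNS hna)⟩, rfl⟩
  have hker : θ.ker = N.addSubgroupOf S := by
    ext a
    exact Subtype.ext_iff.trans (QuotientAddGroup.eq_zero_iff a.1)
  exact (QuotientAddGroup.quotientAddEquivOfEq hker.symm).trans
    (QuotientAddGroup.quotientKerEquivOfSurjective θ hθ)

theorem component_group_iso_torsion_general (m : ℕ)
    (ℓ : Fin m → ℕ)
    (hgcd : Finset.gcd Finset.univ ℓ = 1)
    (T : Subgroup (Fin m → ℂˣ))
    (hT : (T : Set (Fin m → ℂˣ)) = {y | ∃ u : ℂˣ, y = fun j => u ^ ℓ j})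
    (D : Subgroup (Fin m → ℂˣ)) (hD : Finite D)
    (G : Subgroup (Fin m → ℂˣ)) (hG : G = D ⊔ T)
    (LG : AddSubgroup (Fin m → ℤ))
    (hLG : ∀ I : Fin m → ℤ, I ∈ LG ↔ ∀ g ∈ G, (∏ j, (g j) ^ (I j)) = 1) :
    Finite (↥G ⧸ T.subgroupOf G) ∧
    Nonempty ((↥G ⧸ T.subgroupOf G) ≃*
      Multiplicative ↥(AddCommGroup.torsion ((Fin m → ℤ) ⧸ LG))) := by
  obtain rfl : T = torus ℓ := SetLike.coe_injective hT
  obtain rfl : LG = charAnnihilator G := AddSubgroup.ext hLG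
  have hTG : torus ℓ ≤ G := hG ▸ le_sup_right
  have hF : Finite (G ⧸ (torus ℓ).subgroupOf G) := by
    subst hG
    exact Finite.of_equiv _ (QuotientGroup.quotientInfEquivProdNormalQuotient D _).toEquiv
  refine ⟨hF, ?_⟩
  let e := charAnnihilatorQuotientEquiv (G := G) fun g _ hg =>
    mem_torus_of_forall_monomialChar_eq_one hgcd fun I hI =>
      hg I (mem_charAnnihilator_torus_iff.mpr hI)
  obtain ⟨χ⟩ := CommGroup.monoidHom_mulEquiv_of_hasEnoughRootsOfUnity (G ⧸ (torus ℓ).subgroupOf G) ℂ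
  have := Finite.of_equiv _ χ.symm.toEquiv
  have := Finite.of_equiv _ e.symm.toEquiv
  let e' := AddSubgroup.quotientEquivTorsion (charAnnihilator_anti hTG)
    (fun n I hn => (nsmul_mem_charAnnihilator_torus_iff hn).mp) isAddTorsion_of_finite
  exact ⟨χ.symm.trans (AddEquiv.toMultiplicativeRight (e.symm.trans e'))⟩

/-- Second part of Proposition 4.1 of Neumann–Wahl, "The End Curve Theorem for normal
complex surface singularities".  Let `ℓ 0, …, ℓ (m-1)` be positive integers with
gcd `1`, `T = {(u^(ℓ 0), …, u^(ℓ (m-1))) : u ∈ ℂ^×} ≤ (ℂ^×)^m`, `D` a finite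
subgroup of `(ℂ^×)^m`, and `G = D ⊔ T`.  With
`L_G = {I ∈ ℤ^m : g^I = 1 ∀ g ∈ G}`, the group of components `F = G/T` is finite
and isomorphic to the torsion subgroup of `Ĝ = ℤ^m / L_G`. -/
theorem component_group_iso_torsion (m : ℕ) (hm : 1 ≤ m)
    (ℓ : Fin m → ℕ) (hℓ : ∀ j, 0 < ℓ j)
    (hgcd : Finset.gcd Finset.univ ℓ = 1)
    (T : Subgroup (Fin m → ℂˣ))
    (hT : (T : Set (Fin m → ℂˣ)) = {y | ∃ u : ℂˣ, y = fun j => u ^ ℓ j})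
    (D : Subgroup (Fin m → ℂˣ)) (hD : Finite D)
    (G : Subgroup (Fin m → ℂˣ)) (hG : G = D ⊔ T)
    (LG : AddSubgroup (Fin m → ℤ))
    (hLG : ∀ I : Fin m → ℤ, I ∈ LG ↔ ∀ g ∈ G, (∏ j, (g j) ^ (I j)) = 1) :
    Finite (↥G ⧸ T.subgroupOf G) ∧
    Nonempty ((↥G ⧸ T.subgroupOf G) ≃*
      Multiplicative ↥(AddCommGroup.torsion ((Fin m → ℤ) ⧸ LG))) :=
  component_group_iso_torsion_general m ℓ hgcd T hT D hD G hG LG hLG
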